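/- Let M be an n×n real positive semidefinite matrix, x, v, ξ ∈ ℝ^n, and η ∈ ℝ, and define f(q) := qᵀ(xxᵀ − η·I)q + 2·⟨q, η·ξ − (xxᵀ)v⟩ + ((xᵀv)² − η·‖ξ‖₂²) for q ∈ ℝ^n. For λ, θ ∈ ℝ let B(λ,θ) denote the (n+1)×(n+1) symmetric block matrix with upper-left block η·I − xxᵀ + λ·M, upper-right column (xxᵀ)v − η·ξ, and lower-right scalar η·‖ξ‖₂² − (xᵀv)² − λ − θ. Then: (a) if λ ≥ 0 and B(λ,θ) is positive semidefinite, then f(q) ≤ −θ for every q ∈ ℝ^n with qᵀMq ≤ 1; and (b) if S ∈ ℝ is the supremum of f over {q : qᵀMq ≤ 1} (i.e. this supremum is finite and equals S), then there exists λ ≥ 0 such that B(λ, −S) is positive semidefinite. -/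

import Mathlib

/-! Part (a): the quadratic form of `B(λ,θ)` at `(q, 1)` is `λ(qᵀMq − 1) − f(q) − θ`.

Part (b): homogenize: with `F(q,t) = (xᵀ(q − tv))² − η‖q − tξ‖²`, so that `F(q,1) = f(q)` and
`F(tq,t) = t² f(q)`, the bound `f ≤ S` on the ellipsoid says that `t² − qᵀMq ≥ 0` forces
`S t² − F(q,t) ≥ 0` (for `t = 0` by continuity). The quadratic form of `B(λ,−S)` is
`(S t² − F) − λ(t² − qᵀMq)`, so the homogeneous S-lemma produces `λ`.

The S-lemma is proved elementarily. If `Q₁ z > 0 > Q₁ w`, then `t ↦ Q₁ (z + t w)` has two roots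
of opposite signs, at which `Q₂ ≥ 0`; a positive combination of these two inequalities gives
`Q₂ w / Q₁ w ≤ Q₂ z / Q₁ z`, so `λ = inf {Q₂ z / Q₁ z | Q₁ z > 0}` works. -/

open Matrix
open scoped BigOperators

/-- The quadratic objective `f(q) = qᵀ(xxᵀ − ηI)q + 2⟨q, ηξ − (xxᵀ)v⟩ + ((xᵀv)² − η‖ξ‖₂²)`
of the FW-oracle subproblem with ellipsoidal support. -/
noncomputable def sProcObj {n : ℕ} (x v ξ : Fin n → ℝ) (η : ℝ) (q : Fin n → ℝ) : ℝ :=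
  q ⬝ᵥ ((Matrix.vecMulVec x x - η • (1 : Matrix (Fin n) (Fin n) ℝ)) *ᵥ q) +
    2 * (q ⬝ᵥ (η • ξ - Matrix.vecMulVec x x *ᵥ v)) +
    ((x ⬝ᵥ v) ^ 2 - η * (ξ ⬝ᵥ ξ))

/-- The block matrix `B(λ,θ)` of the S-procedure SDP: upper-left block
`ηI − xxᵀ + λM`, upper-right column `(xxᵀ)v − ηξ`, lower-right scalar
`η‖ξ‖₂² − (xᵀv)² − λ − θ`. -/
noncomputable def sProcMat {n : ℕ} (M : Matrix (Fin n) (Fin n) ℝ) (x v ξ : Fin n → ℝ)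
    (η lam θ : ℝ) : Matrix (Fin n ⊕ Unit) (Fin n ⊕ Unit) ℝ :=
  Matrix.fromBlocks
    (η • (1 : Matrix (Fin n) (Fin n) ℝ) - Matrix.vecMulVec x x + lam • M)
    (Matrix.of fun i _ => (Matrix.vecMulVec x x *ᵥ v - η • ξ) i)
    (Matrix.of fun _ j => (Matrix.vecMulVec x x *ᵥ v - η • ξ) j)
    (Matrix.of fun _ _ => η * (ξ ⬝ᵥ ξ) - (x ⬝ᵥ v) ^ 2 - lam - θ)

lemma mul_sub_mul_nonneg_of_nonneg_at_roots {a a' b b' c d : ℝ} (ha : 0 < a) (ha' : a' < 0)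
    (h : ∀ t, a + c * t + a' * t ^ 2 = 0 → 0 ≤ b + d * t + b' * t ^ 2) :
    0 ≤ a * b' - a' * b := by
  obtain ⟨s, hs, hs2⟩ : ∃ s : ℝ, 0 < s ∧ s ^ 2 = c ^ 2 - 4 * a * a' :=
    ⟨√(c ^ 2 - 4 * a * a'), Real.sqrt_pos.2 (by nlinarith [sq_nonneg c]),
      Real.sq_sqrt (by nlinarith [sq_nonneg c])⟩
  obtain ⟨r₁, hr₁⟩ : ∃ r, 2 * a' * r = -c + s :=
    ⟨(-c + s) / (2 * a'), mul_div_cancel₀ _ (by linarith)⟩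
  obtain ⟨r₂, hr₂⟩ : ∃ r, 2 * a' * r = -c - s :=
    ⟨(-c - s) / (2 * a'), mul_div_cancel₀ _ (by linarith)⟩
  have h₁ := h r₁ (by nlinarith)
  have h₂ := h r₂ (by nlinarith)
  have hprod : a' * (r₁ * r₂) = a := by
    apply mul_left_cancel₀ (by linarith : (4 * a' : ℝ) ≠ 0)
    linear_combination (2 * a' * r₂) * hr₁ + (-c + s) * hr₂ - hs2
  have hr : r₁ < r₂ := by nlinarith
  have hr₁ : r₁ < 0 := by nlinarith
  have hr₂ : 0 < r₂ := by nlinarith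
  have key : 0 ≤ (r₂ - r₁) * (a * b' - a' * b) := by
    calc (0 : ℝ)
        ≤ -a' * (r₂ * (b + d * r₁ + b' * r₁ ^ 2) - r₁ * (b + d * r₂ + b' * r₂ ^ 2)) := by
          have := mul_nonneg hr₂.le h₁
          have := mul_nonneg (neg_nonneg.2 hr₁.le) h₂
          exact mul_nonneg (neg_nonneg.2 ha'.le) (by linarith)
      _ = (r₂ - r₁) * (a * b' - a' * b) := by rw [← hprod]; ring
  exact (mul_nonneg_iff_of_pos_left (sub_pos.2 hr)).1 key

namespace QuadraticMap

variable {V : Type*} [AddCommGroup V] [Module ℝ V]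

lemma map_add_smul (Q : QuadraticMap ℝ V ℝ) (z w : V) (t : ℝ) :
    Q (z + t • w) = Q z + polar Q z w * t + Q w * t ^ 2 := by
  rw [QuadraticMap.map_add Q z (t • w), QuadraticMap.map_smul, polar_smul_right, smul_eq_mul,
    smul_eq_mul]
  ring

variable {Q₁ Q₂ : QuadraticMap ℝ V ℝ}

lemma div_le_div_of_nonneg_imp_nonneg (h : ∀ z, 0 ≤ Q₁ z → 0 ≤ Q₂ z) {z w : V}
    (hz : 0 < Q₁ z) (hw : Q₁ w < 0) : Q₂ w / Q₁ w ≤ Q₂ z / Q₁ z := by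
  have key : 0 ≤ Q₁ z * Q₂ w - Q₁ w * Q₂ z :=
    mul_sub_mul_nonneg_of_nonneg_at_roots (c := polar Q₁ z w) (d := polar Q₂ z w) hz hw
      fun t ht => by
        simpa only [map_add_smul] using h (z + t • w) (by rw [map_add_smul]; linarith)
  rw [← neg_div_neg_eq (Q₂ w), div_le_div_iff₀ (neg_pos.2 hw) hz]
  linarith

theorem s_lemma {z₀ : V} (hz₀ : 0 < Q₁ z₀) (h : ∀ z, 0 ≤ Q₁ z → 0 ≤ Q₂ z) :
    ∃ lam : ℝ, 0 ≤ lam ∧ ∀ z, lam * Q₁ z ≤ Q₂ z := by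
  set T := (fun z => Q₂ z / Q₁ z) '' {z | 0 < Q₁ z}
  have hT : T.Nonempty := ⟨_, z₀, hz₀, rfl⟩
  have hT₀ : ∀ r ∈ T, 0 ≤ r := by
    rintro _ ⟨z, hz, rfl⟩
    exact div_nonneg (h z hz.le) hz.le
  refine ⟨sInf T, le_csInf hT hT₀, fun z => ?_⟩
  rcases lt_trichotomy (Q₁ z) 0 with hneg | hzero | hpos
  · refine (div_le_iff_of_neg hneg).1 (le_csInf hT ?_)
    rintro _ ⟨w, hw, rfl⟩
    exact div_le_div_of_nonneg_imp_nonneg h hw hneg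
  · simpa [hzero] using h z hzero.ge
  · exact (le_div_iff₀ hpos).1 (csInf_le ⟨0, hT₀⟩ ⟨z, hpos, rfl⟩)

end QuadraticMap

lemma dotProduct_fromBlocks_mulVec {m R : Type*} [Fintype m] [CommRing R] (A : Matrix m m R)
    (c : m → R) (e : R) (z : m ⊕ Unit → R) :
    z ⬝ᵥ (fromBlocks A (of fun i _ => c i) (of fun _ j => c j) (of fun _ _ => e) *ᵥ z) =
      (z ∘ Sum.inl) ⬝ᵥ (A *ᵥ (z ∘ Sum.inl)) + 2 * z (Sum.inr ()) * (c ⬝ᵥ (z ∘ Sum.inl)) +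
        e * z (Sum.inr ()) ^ 2 := by
  obtain ⟨q, t, rfl⟩ : ∃ q t, z = Sum.elim q fun _ => t :=
    ⟨z ∘ Sum.inl, z (Sum.inr ()), by ext (i | _) <;> rfl⟩
  have hcol : (of fun i (_ : Unit) => c i) *ᵥ (fun _ => t) = t • c := by
    ext i; simp [mulVec, dotProduct, mul_comm]
  have hrow : (fun _ : Unit => t) ⬝ᵥ
      ((of fun (_ : Unit) j => c j) *ᵥ q + (of fun (_ _ : Unit) => e) *ᵥ fun _ => t) =
        t * (c ⬝ᵥ q) + e * t ^ 2 := by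
    simp [dotProduct, mulVec]; ring
  rw [fromBlocks_mulVec, sumElim_dotProduct_sumElim, Sum.elim_comp_inl, Sum.elim_comp_inr, hcol,
    hrow, dotProduct_add, dotProduct_smul, dotProduct_comm q c, Sum.elim_inr, smul_eq_mul]
  ring

noncomputable def sProcObjHomog {n : ℕ} (x v ξ : Fin n → ℝ) (η : ℝ) (q : Fin n → ℝ) (t : ℝ) : ℝ :=
  (x ⬝ᵥ (q - t • v)) ^ 2 - η * ((q - t • ξ) ⬝ᵥ (q - t • ξ))

section

variable {n : ℕ} (x v ξ : Fin n → ℝ) (η : ℝ)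

lemma sProcObj_eq_sProcObjHomog (q : Fin n → ℝ) :
    sProcObj x v ξ η q = sProcObjHomog x v ξ η q 1 := by
  simp only [sProcObj, sProcObjHomog, one_smul, sub_mulVec, vecMulVec_mulVec, smul_mulVec,
    one_mulVec, dotProduct_sub, sub_dotProduct, dotProduct_smul, smul_eq_mul, op_smul_eq_mul,
    dotProduct_comm ξ q, dotProduct_comm q x]
  ring

lemma sProcObjHomog_smul (q : Fin n → ℝ) (t : ℝ) :
    sProcObjHomog x v ξ η (t • q) t = t ^ 2 * sProcObj x v ξ η q := by
  rw [sProcObj_eq_sProcObjHomog, sProcObjHomog, sProcObjHomog, one_smul, one_smul, ← smul_sub,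
    ← smul_sub, dotProduct_smul, smul_dotProduct, dotProduct_smul, smul_eq_mul, smul_eq_mul,
    smul_eq_mul]
  ring

lemma continuous_sProcObjHomog (q : Fin n → ℝ) : Continuous (sProcObjHomog x v ξ η q) := by
  unfold sProcObjHomog
  fun_prop

lemma dotProduct_sProcMat_mulVec (M : Matrix (Fin n) (Fin n) ℝ) (lam θ : ℝ)
    (z : Fin n ⊕ Unit → ℝ) :
    z ⬝ᵥ (sProcMat M x v ξ η lam θ *ᵥ z) =
      lam * ((z ∘ Sum.inl) ⬝ᵥ (M *ᵥ (z ∘ Sum.inl)) - z (Sum.inr ()) ^ 2) -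
        sProcObjHomog x v ξ η (z ∘ Sum.inl) (z (Sum.inr ())) - θ * z (Sum.inr ()) ^ 2 := by
  rw [sProcMat, dotProduct_fromBlocks_mulVec, sProcObjHomog]
  generalize z ∘ Sum.inl = q
  generalize z (Sum.inr ()) = t
  simp only [add_mulVec, sub_mulVec, vecMulVec_mulVec, smul_mulVec, one_mulVec,
    dotProduct_add, dotProduct_sub, sub_dotProduct, dotProduct_smul, smul_dotProduct, smul_eq_mul,
    op_smul_eq_mul, dotProduct_comm ξ q, dotProduct_comm q x]
  ring

end

section

variable {n : ℕ} {M : Matrix (Fin n) (Fin n) ℝ} {x v ξ : Fin n → ℝ} {η : ℝ}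

lemma isHermitian_sProcMat (hM : M.IsHermitian) (lam θ : ℝ) :
    (sProcMat M x v ξ η lam θ).IsHermitian := by
  have hxx : (vecMulVec x x).IsHermitian := by
    simpa using (posSemidef_vecMulVec_self_star x).isHermitian
  refine .fromBlocks ?_ (by ext; rfl) (by ext; rfl)
  exact ((isHermitian_one.smul (.all η)).sub hxx).add (hM.smul (.all lam))

lemma sProcObj_le_of_posSemidef {lam θ : ℝ} (hlam : 0 ≤ lam)
    (hB : (sProcMat M x v ξ η lam θ).PosSemidef) {q : Fin n → ℝ} (hq : q ⬝ᵥ (M *ᵥ q) ≤ 1) :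
    sProcObj x v ξ η q ≤ -θ := by
  have h := hB.dotProduct_mulVec_nonneg (Sum.elim q fun _ => 1)
  rw [star_trivial, dotProduct_sProcMat_mulVec] at h
  simp only [Sum.elim_comp_inl, Sum.elim_inr, one_pow, mul_one] at h
  rw [sProcObj_eq_sProcObjHomog]
  nlinarith [mul_nonpos_of_nonneg_of_nonpos hlam (sub_nonpos.2 hq)]

open Filter Topology in
lemma sProcObjHomog_le_of_forall_sProcObj_le {S : ℝ}
    (hS : ∀ q, q ⬝ᵥ (M *ᵥ q) ≤ 1 → sProcObj x v ξ η q ≤ S) {q : Fin n → ℝ} {t : ℝ}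
    (hq : q ⬝ᵥ (M *ᵥ q) ≤ t ^ 2) : sProcObjHomog x v ξ η q t ≤ S * t ^ 2 := by
  have hne : ∀ s ≠ 0, q ⬝ᵥ (M *ᵥ q) ≤ s ^ 2 → sProcObjHomog x v ξ η q s ≤ S * s ^ 2 := by
    intro s hs hqs
    have hq' : (s⁻¹ • q) ⬝ᵥ (M *ᵥ (s⁻¹ • q)) ≤ 1 := by
      rw [mulVec_smul, dotProduct_smul, smul_dotProduct, smul_eq_mul, smul_eq_mul, ← mul_assoc,
        ← mul_inv, ← sq, inv_mul_le_one₀ (by positivity)]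
      exact hqs
    calc sProcObjHomog x v ξ η q s = s ^ 2 * sProcObj x v ξ η (s⁻¹ • q) := by
          rw [← sProcObjHomog_smul, smul_inv_smul₀ hs]
      _ ≤ s ^ 2 * S := by gcongr; exact hS _ hq'
      _ = S * s ^ 2 := mul_comm _ _
  rcases eq_or_ne t 0 with rfl | ht
  · have hq₀ : q ⬝ᵥ (M *ᵥ q) ≤ 0 := by simpa using hq
    have hlim : Tendsto (fun s => S * s ^ 2 - sProcObjHomog x v ξ η q s) (𝓝[≠] 0)
        (𝓝 (S * 0 ^ 2 - sProcObjHomog x v ξ η q 0)) :=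
      ((continuous_const.mul (continuous_pow 2)).sub
        (continuous_sProcObjHomog x v ξ η q)).continuousAt.tendsto.mono_left nhdsWithin_le_nhds
    have := ge_of_tendsto hlim (eventually_nhdsWithin_of_forall fun s hs =>
      sub_nonneg.2 (hne s hs (hq₀.trans (sq_nonneg s))))
    linarith
  · exact hne t ht hq

lemma Matrix.toQuadraticForm'_apply {m R : Type*} [Fintype m] [DecidableEq m] [CommRing R]
    (A : Matrix m m R) (z : m → R) : A.toQuadraticForm' z = z ⬝ᵥ (A *ᵥ z) := by
  simp [toQuadraticForm', toLinearMap₂'_apply']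

lemma exists_posSemidef_sProcMat (hM : M.IsHermitian) {S : ℝ}
    (hS : ∀ q, q ⬝ᵥ (M *ᵥ q) ≤ 1 → sProcObj x v ξ η q ≤ S) :
    ∃ lam, 0 ≤ lam ∧ (sProcMat M x v ξ η lam (-S)).PosSemidef := by
  set A : Matrix (Fin n ⊕ Unit) (Fin n ⊕ Unit) ℝ :=
    fromBlocks (-M) (of fun i _ => (0 : Fin n → ℝ) i) (of fun _ j => (0 : Fin n → ℝ) j)
      (of fun _ _ => 1)
  have hA : ∀ z,
      A.toQuadraticForm' z = z (Sum.inr ()) ^ 2 - (z ∘ Sum.inl) ⬝ᵥ (M *ᵥ (z ∘ Sum.inl)) := by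
    intro z
    rw [toQuadraticForm'_apply, dotProduct_fromBlocks_mulVec, neg_mulVec, dotProduct_neg,
      zero_dotProduct]
    ring
  have hB : ∀ lam z, z ⬝ᵥ (sProcMat M x v ξ η lam (-S) *ᵥ z) =
      (sProcMat M x v ξ η 0 (-S)).toQuadraticForm' z - lam * A.toQuadraticForm' z := by
    intro lam z
    rw [toQuadraticForm'_apply, dotProduct_sProcMat_mulVec, dotProduct_sProcMat_mulVec, hA]
    ring
  obtain ⟨lam, hlam, hle⟩ := QuadraticMap.s_lemma (z₀ := Sum.elim 0 fun _ => 1)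
    (Q₁ := A.toQuadraticForm') (Q₂ := (sProcMat M x v ξ η 0 (-S)).toQuadraticForm')
    (by simp [hA]) fun z hz => by
      rw [hA, sub_nonneg] at hz
      have := sProcObjHomog_le_of_forall_sProcObj_le hS hz
      rw [toQuadraticForm'_apply, dotProduct_sProcMat_mulVec]
      linarith
  refine ⟨lam, hlam, .of_dotProduct_mulVec_nonneg (isHermitian_sProcMat hM lam (-S)) fun z => ?_⟩
  rw [star_trivial, hB]
  linarith [hle z]

end

/-- Lemma 6.6 (S-procedure): (a) if `λ ≥ 0` and `B(λ,θ) ⪰ 0` then `f(q) ≤ −θ` on the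
ellipsoid `{q : qᵀMq ≤ 1}`; (b) if the supremum of `f` over the ellipsoid is finite and
equals `S`, then there is `λ ≥ 0` with `B(λ,−S) ⪰ 0`. -/
theorem s_procedure_ellipsoid {n : ℕ} (M : Matrix (Fin n) (Fin n) ℝ)
    (hM : M.PosSemidef) (x v ξ : Fin n → ℝ) (η : ℝ) :
    (∀ lam θ : ℝ, 0 ≤ lam → (sProcMat M x v ξ η lam θ).PosSemidef →
      ∀ q : Fin n → ℝ, q ⬝ᵥ (M *ᵥ q) ≤ 1 → sProcObj x v ξ η q ≤ -θ) ∧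
    (∀ S : ℝ, IsLUB ((fun q => sProcObj x v ξ η q) '' {q | q ⬝ᵥ (M *ᵥ q) ≤ 1}) S →
      ∃ lam : ℝ, 0 ≤ lam ∧ (sProcMat M x v ξ η lam (-S)).PosSemidef) :=
  ⟨fun _ _ hlam hB _ hq => sProcObj_le_of_posSemidef hlam hB hq,
    fun _ hS => exists_posSemidef_sProcMat hM.isHermitian fun q hq => hS.1 ⟨q, hq, rfl⟩⟩
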